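/- arXiv:1712.01621 — 5 statements merged into one kernel-verified Lean document; each statement's English description precedes it below -/
import Mathlib

section
/- Let S be a nonempty compact subset of ℝ^d and c ∈ ℝ^d. If z* ∈ conv(S) minimizes c⋅z over conv(S) and is lexicographically minimal among all minimizers of c⋅z over conv(S), then z* ∈ S; consequently z* also minimizes c⋅z over S. -/
/-- `v ≤_lex w` : either `v = w`, or there is a coordinate `k` with `v k < w k`
and `v m = w m` for all `m < k`. -/
def lexLe {d : ℕ} (v w : Fin d → ℝ) : Prop :=
  v = w ∨ ∃ k : Fin d, v k < w k ∧ ∀ m : Fin d, m < k → v m = w m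

/-- If a point of `conv T` attains a lower bound `μ` of a linear functional `f`
on `T`, then it lies in the convex hull of the points of `T` where `f = μ`. -/
lemma mem_convexHull_argmin {d : ℕ} (T : Set (Fin d → ℝ)) (f : (Fin d → ℝ) →ₗ[ℝ] ℝ)
    (μ : ℝ) (hμ : ∀ t ∈ T, μ ≤ f t) {x : Fin d → ℝ}
    (hx : x ∈ convexHull ℝ T) (hfx : f x = μ) :
    x ∈ convexHull ℝ {t ∈ T | f t = μ} := by
  rw [convexHull_eq] at hx ⊢
  obtain ⟨ι, t, w, z, hw0, hw1, hz, hcm⟩ := hx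
  have hfsum : ∑ i ∈ t, w i * f (z i) = μ := by
    have h := congrArg f hcm
    rw [Finset.centerMass_eq_of_sum_1 _ _ hw1, map_sum, hfx] at h
    simpa [map_smul, smul_eq_mul] using h
  have hzero : ∀ i ∈ t, w i * (f (z i) - μ) = 0 := by
    have hs : ∑ i ∈ t, w i * (f (z i) - μ) = 0 := by
      have : ∑ i ∈ t, w i * (f (z i) - μ)
          = (∑ i ∈ t, w i * f (z i)) - μ * ∑ i ∈ t, w i := by
        rw [Finset.mul_sum, ← Finset.sum_sub_distrib]
        congr 1; ext i; ring
      rw [this, hfsum, hw1, mul_one, sub_self]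
    have hnn : ∀ i ∈ t, 0 ≤ w i * (f (z i) - μ) := fun i hi =>
      mul_nonneg (hw0 i hi) (sub_nonneg.mpr (hμ _ (hz i hi)))
    exact fun i hi => le_antisymm (hs ▸ Finset.single_le_sum hnn hi) (hnn i hi)
  refine ⟨ι, {i ∈ t | w i ≠ 0}, w, z, fun i hi => hw0 i (Finset.mem_filter.mp hi).1, ?_, ?_, ?_⟩
  · rw [Finset.sum_filter_ne_zero]; exact hw1
  · intro i hi
    obtain ⟨hit, hwi⟩ := Finset.mem_filter.mp hi
    refine ⟨hz i hit, ?_⟩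
    have := hzero i hit
    rcases mul_eq_zero.mp this with h | h
    · exact absurd h hwi
    · linarith [sub_eq_zero.mp h]
  · rw [Finset.centerMass_filter_ne_zero]; exact hcm

/-- If `S ⊆ ℝ^d` is nonempty and compact and `z*` minimizes `c ⋅ z` over
`conv(S)` and is lexicographically minimal among those minimizers, then
`z* ∈ S` and `z*` minimizes `c ⋅ z` over `S`. -/
theorem lex_min_of_convexHull_mem (d : ℕ) (S : Set (Fin d → ℝ)) (hne : S.Nonempty)
    (hcpt : IsCompact S) (c : Fin d → ℝ) (zstar : Fin d → ℝ)
    (hmem : zstar ∈ convexHull ℝ S)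
    (hmin : ∀ z ∈ convexHull ℝ S, ∑ i, c i * zstar i ≤ ∑ i, c i * z i)
    (hlex : ∀ z ∈ convexHull ℝ S,
      (∑ i, c i * z i) = (∑ i, c i * zstar i) → lexLe zstar z) :
    zstar ∈ S ∧ ∀ z ∈ S, ∑ i, c i * zstar i ≤ ∑ i, c i * z i := by
  classical
  -- the linear functional z ↦ ∑ c i * z i
  let f : (Fin d → ℝ) →ₗ[ℝ] ℝ :=
    { toFun := fun z => ∑ i, c i * z i
      map_add' := by intro x y; simp [mul_add, Finset.sum_add_distrib]
      map_smul' := by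
        intro a x
        simp only [smul_eq_mul, Pi.smul_apply, RingHom.id_apply, Finset.mul_sum]
        exact Finset.sum_congr rfl fun i _ => by ring }
  -- Invariant by induction on k
  have main : ∀ k : ℕ, ∃ T : Set (Fin d → ℝ), T ⊆ S ∧ zstar ∈ convexHull ℝ T ∧
      (∀ t ∈ T, (∑ i, c i * t i) = ∑ i, c i * zstar i) ∧
      (∀ t ∈ T, ∀ m : Fin d, (m : ℕ) < k → t m = zstar m) := by
    intro k
    induction k with
    | zero =>
      refine ⟨{t ∈ S | f t = f zstar}, fun t ht => ht.1, ?_, fun t ht => ht.2, by simp⟩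
      exact mem_convexHull_argmin S f (f zstar)
        (fun t ht => hmin t (subset_convexHull ℝ S ht)) hmem rfl
    | succ k ih =>
      obtain ⟨T, hTS, hzT, hTc, hTcoord⟩ := ih
      by_cases hk : k < d
      · set κ : Fin d := ⟨k, hk⟩
        -- zstar κ is a lower bound for coordinate κ on T
        have hbd : ∀ t ∈ T, zstar κ ≤ t κ := by
          intro t ht
          by_contra hlt
          push_neg at hlt
          have hlexle := hlex t (subset_convexHull ℝ S (hTS ht)) (hTc t ht)
          rcases hlexle with h | ⟨j, hjlt, hjeq⟩
          · rw [h] at hlt; exact lt_irrefl _ hlt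
          · rcases lt_trichotomy j κ with hj | hj | hj
            · have heq := hTcoord t ht j (by exact_mod_cast hj)
              rw [heq] at hjlt; exact lt_irrefl _ hjlt
            · subst hj; exact absurd hjlt (not_lt.mpr hlt.le)
            · have := hjeq κ hj
              rw [this] at hlt; exact lt_irrefl _ hlt
        have hproj : zstar ∈ convexHull ℝ {t ∈ T | (LinearMap.proj κ : (Fin d → ℝ) →ₗ[ℝ] ℝ) t = zstar κ} := by
          refine mem_convexHull_argmin T (LinearMap.proj κ) (zstar κ) ?_ hzT rfl
          intro t ht; exact hbd t ht
        refine ⟨{t ∈ T | t κ = zstar κ}, fun t ht => hTS ht.1, hproj, fun t ht => hTc t ht.1, ?_⟩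
        intro t ht m hm
        rcases Nat.lt_succ_iff_lt_or_eq.mp hm with h | h
        · exact hTcoord t ht.1 m h
        · have : m = κ := Fin.ext h
          rw [this]; exact ht.2
      · -- k ≥ d : coordinates condition is the same as for k
        refine ⟨T, hTS, hzT, hTc, fun t ht m hm => hTcoord t ht m ?_⟩
        exact lt_of_lt_of_le m.isLt (le_of_not_gt hk)
  obtain ⟨T, hTS, hzT, _, hTcoord⟩ := main d
  have hTsub : T ⊆ {zstar} := by
    intro t ht
    have : t = zstar := funext fun m => hTcoord t ht m m.isLt
    simp [this]
  have hTz : zstar ∈ S := by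
    have : zstar ∈ convexHull ℝ ({zstar} : Set (Fin d → ℝ)) :=
      convexHull_mono hTsub hzT
    have hne' : T.Nonempty := by
      by_contra h
      rw [Set.not_nonempty_iff_eq_empty.mp h, convexHull_empty] at hzT
      exact hzT
    obtain ⟨t, ht⟩ := hne'
    have : t = zstar := funext fun m => hTcoord t ht m m.isLt
    rw [← this]; exact hTS ht
  exact ⟨hTz, fun z hz => hmin z (subset_convexHull ℝ S hz)⟩
end

section
/- (Meyer's theorem, bounded case.) Let d = d_Z + d_R, let P = {z ∈ ℝ^d : a_i⋅z ≤ b_i, i = 1,…,n} be a bounded polyhedron given by finitely many linear inequalities, and let S = P ∩ (ℤ^{d_Z} × ℝ^{d_R}) = {z ∈ P : z_k ∈ ℤ for all k = 1,…,d_Z}. Then conv(S) is a polytope: there exists a finite set F ⊆ ℝ^d with conv(S) = conv(F). -/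
/-!
Since `P` is bounded, the integer coordinates of points of `S` take finitely many values, so `S`
is a finite union of slices `P ∩ {z | z_k = v_k for k < d_Z}`. Each slice is a bounded
polyhedron, hence by Krein–Milman the convex hull of its extreme points; and a polyhedron has
finitely many extreme points, because an extreme point is determined by the set of constraints
active at it. So `conv(S)` is the convex hull of the finite union of these extreme points.
-/

open Set Filter Topology Bornology

section Polyhedron

variable {E ι : Type*} [AddCommGroup E] [Module ℝ E]

def polyhedron (f : ι → Module.Dual ℝ E) (b : ι → ℝ) : Set E := {z | ∀ i, f i z ≤ b i}

variable {f : ι → Module.Dual ℝ E} {b : ι → ℝ}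

@[simp]
lemma mem_polyhedron {z : E} : z ∈ polyhedron f b ↔ ∀ i, f i z ≤ b i := Iff.rfl

lemma polyhedron_eq_iInter : polyhedron f b = ⋂ i, {z | f i z ≤ b i} := ofPred_forall _

lemma convex_polyhedron : Convex ℝ (polyhedron f b) := by
  rw [polyhedron_eq_iInter]
  exact convex_iInter fun i => convex_halfSpace_le (f i).isLinear (b i)

lemma polyhedron_inter_setOf_forall_eq {κ : Type*} (g : κ → Module.Dual ℝ E) (c : κ → ℝ) :
    polyhedron f b ∩ {z | ∀ k, g k z = c k} =
      polyhedron (Sum.elim f (Sum.elim g (-g))) (Sum.elim b (Sum.elim c (-c))) := by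
  ext z
  simp [Sum.forall, le_antisymm_iff, forall_and]

/-- Pushing `x` slightly away from `y` keeps it in the polyhedron, since the constraints active
at `x` are also active at `y`; so `x` lies strictly between two points of the polyhedron. -/
lemma eq_of_mem_extremePoints_polyhedron [Finite ι] {x y : E}
    (hx : x ∈ (polyhedron f b).extremePoints ℝ) (hy : y ∈ polyhedron f b)
    (hxy : {i | f i x = b i} ⊆ {i | f i y = b i}) : x = y := by
  have hpush : ∀ᶠ t in 𝓝[>] (0 : ℝ), x + t • (x - y) ∈ polyhedron f b := by
    refine eventually_all.2 fun i => ?_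
    simp only [map_add, map_smul, map_sub, smul_eq_mul]
    rcases (mem_polyhedron.1 (extremePoints_subset hx) i).lt_or_eq with hlt | heq
    · have hcont : Continuous fun t : ℝ => f i x + t * (f i x - f i y) := by fun_prop
      exact nhdsWithin_le_nhds ((hcont.tendsto' 0 _ (by simp)).eventually_le_const hlt)
    · have hyi : f i y = b i := hxy heq
      exact Eventually.of_forall fun t => by simp [heq, hyi]
  obtain ⟨t, hmem, ht⟩ := (hpush.and self_mem_nhdsWithin).exists
  have ht1 : 1 + t ≠ 0 := by positivity
  have hseg : x ∈ openSegment ℝ (x + t • (x - y)) y :=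
    ⟨1 / (1 + t), t / (1 + t), by positivity, by positivity, by rw [← add_div, div_self ht1], by
      match_scalars
      · field_simp
      · field_simp
        ring⟩
  exact ((mem_extremePoints.1 hx).2 _ hmem y hy hseg).2.symm

theorem finite_extremePoints_polyhedron [Finite ι] : ((polyhedron f b).extremePoints ℝ).Finite :=
  Finite.of_finite_image (f := fun x => ({i | f i x = b i} : Set ι)) (toFinite _)
    fun _ hx _ hy hxy => eq_of_mem_extremePoints_polyhedron hx (extremePoints_subset hy) hxy.le

end Polyhedron

section FiniteDimensional

variable {E ι : Type*} [NormedAddCommGroup E] [NormedSpace ℝ E] [FiniteDimensional ℝ E]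
  {f : ι → Module.Dual ℝ E} {b : ι → ℝ}

lemma isClosed_polyhedron : IsClosed (polyhedron f b) := by
  rw [polyhedron_eq_iInter]
  exact isClosed_iInter fun i => isClosed_le (f i).continuous_of_finiteDimensional continuous_const

theorem exists_finset_polyhedron_eq_convexHull [Finite ι] (hbdd : IsBounded (polyhedron f b)) :
    ∃ F : Finset E, polyhedron f b = convexHull ℝ (F : Set E) := by
  have hcomp := Metric.isCompact_of_isClosed_isBounded isClosed_polyhedron hbdd
  have hfin : ((polyhedron f b).extremePoints ℝ).Finite := finite_extremePoints_polyhedron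
  refine ⟨hfin.toFinset, ?_⟩
  rw [Finite.coe_toFinset, ← (hfin.isCompact_convexHull (𝕜 := ℝ)).isClosed.closure_eq,
    closure_convexHull_extremePoints hcomp convex_polyhedron]

theorem exists_finset_polyhedron_inter_eq_convexHull [Finite ι] {κ : Type*} [Finite κ]
    (g : κ → Module.Dual ℝ E) (c : κ → ℝ)
    (hbdd : IsBounded (polyhedron f b ∩ {z | ∀ k, g k z = c k})) :
    ∃ F : Finset E, polyhedron f b ∩ {z | ∀ k, g k z = c k} = convexHull ℝ (F : Set E) := by
  rw [polyhedron_inter_setOf_forall_eq] at hbdd ⊢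
  exact exists_finset_polyhedron_eq_convexHull hbdd

end FiniteDimensional

theorem exists_finset_convexHull_biUnion_eq {E κ : Type*} [AddCommGroup E] [Module ℝ E]
    {I : Set κ} (hI : I.Finite) {K : κ → Set E}
    (hK : ∀ i ∈ I, ∃ F : Finset E, K i = convexHull ℝ (F : Set E)) :
    ∃ F : Finset E, convexHull ℝ (⋃ i ∈ I, K i) = convexHull ℝ (F : Set E) := by
  choose F hF using hK
  have hfin : (⋃ i, ⋃ h : i ∈ I, (F i h : Set E)).Finite :=
    hI.biUnion' fun i h => (F i h).finite_toSet
  refine ⟨hfin.toFinset, ?_⟩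
  rw [hfin.coe_toFinset]
  apply subset_antisymm
  · refine convexHull_min (iUnion₂_subset fun i h => ?_) (convex_convexHull ℝ _)
    rw [hF i h]
    exact convexHull_mono (subset_iUnion₂ (s := fun i h => (F i h : Set E)) i h)
  · exact convexHull_mono (iUnion₂_mono fun i h => hF i h ▸ subset_convexHull ℝ _)

theorem exists_finite_setOf_intCoords_eq_biUnion {ι : Type*} [Fintype ι] (p : ι → Prop)
    {P : Set (ι → ℝ)} (hP : IsBounded P) :
    ∃ V : Set (ι → ℤ), V.Finite ∧
      {z ∈ P | ∀ k, p k → ∃ m : ℤ, z k = m} =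
        ⋃ v ∈ V, P ∩ {z | ∀ k : {k // p k}, z k = v k} := by
  obtain ⟨R, hR⟩ := hP.exists_norm_le
  refine ⟨(fun z k => ⌊z k⌋) '' P, ?_, ?_⟩
  · refine (Finite.pi fun _ => finite_Icc ⌊-R⌋ ⌊R⌋).subset ?_
    rintro _ ⟨z, hz, rfl⟩ k -
    have hzk := abs_le.1 ((norm_le_pi_norm z k).trans (hR z hz))
    exact ⟨Int.floor_mono hzk.1, Int.floor_mono hzk.2⟩
  · ext z
    simp only [biUnion_image, mem_iUnion, mem_inter_iff, mem_ofPred_eq, exists_prop]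
    constructor
    · rintro ⟨hz, hint⟩
      refine ⟨z, hz, hz, fun k => ?_⟩
      obtain ⟨m, hm⟩ := hint k k.2
      rw [hm, Int.floor_intCast]
    · rintro ⟨w, -, hz, hcoord⟩
      exact ⟨hz, fun k hk => ⟨_, hcoord ⟨k, hk⟩⟩⟩

theorem meyer_bounded_general (dZ d n : ℕ)
    (a : Fin n → Fin d → ℝ) (b : Fin n → ℝ)
    (P : Set (Fin d → ℝ)) (hP : P = {z | ∀ i : Fin n, ∑ j, a i j * z j ≤ b i})
    (hbnd : Bornology.IsBounded P)
    (S : Set (Fin d → ℝ))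
    (hS : S = {z ∈ P | ∀ k : Fin d, (k : ℕ) < dZ → ∃ m : ℤ, z k = (m : ℝ)}) :
    ∃ F : Finset (Fin d → ℝ), convexHull ℝ S = convexHull ℝ (F : Set (Fin d → ℝ)) := by
  have hPpoly : P = polyhedron (fun i => dotProductEquiv ℝ (Fin d) (a i)) b := hP
  obtain ⟨V, hV, hSV⟩ :=
    exists_finite_setOf_intCoords_eq_biUnion (fun k : Fin d => (k : ℕ) < dZ) hbnd
  rw [hS, hSV]
  refine exists_finset_convexHull_biUnion_eq hV fun v _ => ?_
  subst hPpoly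
  exact exists_finset_polyhedron_inter_eq_convexHull
    (fun k : {k : Fin d // (k : ℕ) < dZ} => LinearMap.proj (k : Fin d)) (fun k => v k)
    (hbnd.subset inter_subset_left)

/-- Meyer's theorem (bounded case): if `P = {z : a_i ⋅ z ≤ b_i, i = 1,…,n}` is a
bounded polyhedron in `ℝ^d` with `d = d_Z + d_R`, and
`S = {z ∈ P : z_k ∈ ℤ for k = 1,…,d_Z}`, then `conv(S)` is a polytope, i.e.
the convex hull of a finite set. -/
theorem meyer_bounded (dZ dR d n : ℕ) (hd : d = dZ + dR)
    (a : Fin n → Fin d → ℝ) (b : Fin n → ℝ)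
    (P : Set (Fin d → ℝ)) (hP : P = {z | ∀ i : Fin n, ∑ j, a i j * z j ≤ b i})
    (hbnd : Bornology.IsBounded P)
    (S : Set (Fin d → ℝ))
    (hS : S = {z ∈ P | ∀ k : Fin d, (k : ℕ) < dZ → ∃ m : ℤ, z k = (m : ℝ)}) :
    ∃ F : Finset (Fin d → ℝ), convexHull ℝ S = convexHull ℝ (F : Set (Fin d → ℝ)) :=
  meyer_bounded_general dZ d n a b P hP hbnd S hS
end

section
/- (Validity of the single-row Mixed-Integer Gomory cut.) Let N be a finite index set partitioned as N = I ∪ C (integer and continuous nonbasic indices), let ā_ℓ ∈ ℝ for ℓ ∈ N and b̄ ∈ ℝ, and set f_0 := b̄ − ⌊b̄⌋ and f_ℓ := ā_ℓ − ⌊ā_ℓ⌋ for ℓ ∈ I. Assume 0 < f_0 < 1. Then for every u_0 ∈ ℤ and every family (u_ℓ)_{ℓ∈N} with u_ℓ ≥ 0 for all ℓ ∈ N, u_ℓ ∈ ℤ for all ℓ ∈ I, and u_0 + Σ_{ℓ∈N} ā_ℓ u_ℓ = b̄, the following inequality holds: Σ_{ℓ∈I, f_ℓ ≤ f_0} f_ℓ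 u_ℓ + (f_0/(1−f_0)) Σ_{ℓ∈I, f_ℓ > f_0} (1−f_ℓ) u_ℓ + Σ_{ℓ∈C, ā_ℓ ≥ 0} ā_ℓ u_ℓ − (f_0/(1−f_0)) Σ_{ℓ∈C, ā_ℓ < 0} ā_ℓ u_ℓ ≥ f_0. -/
/-- Validity of the single-row Mixed-Integer Gomory cut.  Given a tableau row
`u₀ + Σ_{ℓ∈N} ā_ℓ u_ℓ = b̄` with `u₀ ∈ ℤ`, nonbasic variables `u_ℓ ≥ 0`,
integer for `ℓ ∈ I` and continuous for `ℓ ∈ C` (where `N = I ∪ C` is a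
partition), and `f₀ = b̄ − ⌊b̄⌋ ∈ (0,1)`, `f_ℓ = ā_ℓ − ⌊ā_ℓ⌋`, the MIG
inequality holds. -/
theorem mig_cut_valid {ι : Type*} [DecidableEq ι] (N I C : Finset ι)
    (hpart : I ∪ C = N) (hdisj : Disjoint I C)
    (abar : ι → ℝ) (bbar : ℝ)
    (f0 : ℝ) (hf0 : f0 = bbar - ⌊bbar⌋)
    (f : ι → ℝ) (hf : ∀ ℓ, f ℓ = abar ℓ - ⌊abar ℓ⌋)
    (hf0pos : 0 < f0) (hf0lt : f0 < 1) :
    ∀ (u0 : ℤ) (u : ι → ℝ),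
      (∀ ℓ ∈ N, 0 ≤ u ℓ) →
      (∀ ℓ ∈ I, ∃ m : ℤ, u ℓ = (m : ℝ)) →
      ((u0 : ℝ) + ∑ ℓ ∈ N, abar ℓ * u ℓ = bbar) →
      (∑ ℓ ∈ I.filter (fun ℓ => f ℓ ≤ f0), f ℓ * u ℓ)
        + (f0 / (1 - f0)) * (∑ ℓ ∈ I.filter (fun ℓ => f0 < f ℓ), (1 - f ℓ) * u ℓ)
        + (∑ ℓ ∈ C.filter (fun ℓ => 0 ≤ abar ℓ), abar ℓ * u ℓ)
        - (f0 / (1 - f0)) * (∑ ℓ ∈ C.filter (fun ℓ => abar ℓ < 0), abar ℓ * u ℓ)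
      ≥ f0 := by
  intro u0 u hu hint heq
  -- u is an integer (its own floor) on I
  have hm : ∀ ℓ ∈ I, ((⌊u ℓ⌋ : ℝ)) = u ℓ := by
    intro ℓ hℓ
    obtain ⟨m, hm⟩ := hint ℓ hℓ
    rw [hm, Int.floor_intCast]
  have hIN : ∀ ℓ ∈ I, ℓ ∈ N := by
    intro ℓ hℓ; rw [← hpart]; exact Finset.mem_union_left _ hℓ
  have hCN : ∀ ℓ ∈ C, ℓ ∈ N := by
    intro ℓ hℓ; rw [← hpart]; exact Finset.mem_union_right _ hℓ
  -- abbreviations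
  set A := ∑ ℓ ∈ I.filter (fun ℓ => f ℓ ≤ f0), f ℓ * u ℓ with hA_def
  set B := ∑ ℓ ∈ I.filter (fun ℓ => f0 < f ℓ), (1 - f ℓ) * u ℓ with hB_def
  set P := ∑ ℓ ∈ C.filter (fun ℓ => 0 ≤ abar ℓ), abar ℓ * u ℓ with hP_def
  set Q := ∑ ℓ ∈ C.filter (fun ℓ => abar ℓ < 0), abar ℓ * u ℓ with hQ_def
  -- splitting sums
  have hfiltI : I.filter (fun ℓ => ¬ f ℓ ≤ f0) = I.filter (fun ℓ => f0 < f ℓ) := by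
    simp only [not_le]
  have hfiltC : C.filter (fun ℓ => ¬ 0 ≤ abar ℓ) = C.filter (fun ℓ => abar ℓ < 0) := by
    simp only [not_le]
  have h1 : ∑ ℓ ∈ I, abar ℓ * u ℓ
      = ∑ ℓ ∈ I, (⌊abar ℓ⌋ : ℝ) * u ℓ + ∑ ℓ ∈ I, f ℓ * u ℓ := by
    rw [← Finset.sum_add_distrib]
    refine Finset.sum_congr rfl fun ℓ _ => ?_
    rw [hf]; ring
  have h2 : ∑ ℓ ∈ I, f ℓ * u ℓ = A + ∑ ℓ ∈ I.filter (fun ℓ => f0 < f ℓ), f ℓ * u ℓ := by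
    rw [hA_def, ← hfiltI, Finset.sum_filter_add_sum_filter_not]
  have h3 : ∑ ℓ ∈ I.filter (fun ℓ => f0 < f ℓ), f ℓ * u ℓ
      = ∑ ℓ ∈ I.filter (fun ℓ => f0 < f ℓ), u ℓ - B := by
    rw [hB_def, ← Finset.sum_sub_distrib]
    refine Finset.sum_congr rfl fun ℓ _ => ?_
    ring
  have h4 : ∑ ℓ ∈ C, abar ℓ * u ℓ = P + Q := by
    rw [hP_def, hQ_def, ← hfiltC, Finset.sum_filter_add_sum_filter_not]
  have h5 : ∑ ℓ ∈ I, (⌊abar ℓ⌋ : ℝ) * u ℓ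
      = ((∑ ℓ ∈ I, ⌊abar ℓ⌋ * ⌊u ℓ⌋ : ℤ) : ℝ) := by
    push_cast
    refine Finset.sum_congr rfl fun ℓ hℓ => ?_
    rw [hm ℓ hℓ]
  have h6 : ∑ ℓ ∈ I.filter (fun ℓ => f0 < f ℓ), u ℓ
      = ((∑ ℓ ∈ I.filter (fun ℓ => f0 < f ℓ), ⌊u ℓ⌋ : ℤ) : ℝ) := by
    push_cast
    refine Finset.sum_congr rfl fun ℓ hℓ => ?_
    rw [hm ℓ (Finset.mem_filter.mp hℓ).1]
  have hsum : ∑ ℓ ∈ N, abar ℓ * u ℓ = ∑ ℓ ∈ I, abar ℓ * u ℓ + ∑ ℓ ∈ C, abar ℓ * u ℓ := by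
    rw [← hpart, Finset.sum_union hdisj]
  -- the key congruence: A + P - (B - Q) = f0 + k for an integer k
  set k : ℤ := ⌊bbar⌋ - u0 - (∑ ℓ ∈ I, ⌊abar ℓ⌋ * ⌊u ℓ⌋)
      - (∑ ℓ ∈ I.filter (fun ℓ => f0 < f ℓ), ⌊u ℓ⌋) with hk_def
  have key : A + P - (B - Q) = f0 + (k : ℝ) := by
    have : (k : ℝ) = ⌊bbar⌋ - u0 - ((∑ ℓ ∈ I, ⌊abar ℓ⌋ * ⌊u ℓ⌋ : ℤ) : ℝ)
        - ((∑ ℓ ∈ I.filter (fun ℓ => f0 < f ℓ), ⌊u ℓ⌋ : ℤ) : ℝ) := by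
      rw [hk_def]; push_cast; ring
    rw [this, ← h5, ← h6]
    rw [hsum, h1, h2, h3, h4] at heq
    linarith
  -- sign facts
  have hfnn : ∀ ℓ, 0 ≤ f ℓ := by
    intro ℓ; rw [hf]; have := Int.floor_le (abar ℓ); linarith
  have hflt : ∀ ℓ, f ℓ < 1 := by
    intro ℓ; rw [hf]; have := Int.lt_floor_add_one (abar ℓ); linarith
  have hAnn : 0 ≤ A := by
    refine Finset.sum_nonneg fun ℓ hℓ => ?_
    have hℓI := (Finset.mem_filter.mp hℓ).1
    exact mul_nonneg (hfnn ℓ) (hu ℓ (hIN ℓ hℓI))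
  have hBnn : 0 ≤ B := by
    refine Finset.sum_nonneg fun ℓ hℓ => ?_
    have hℓI := (Finset.mem_filter.mp hℓ).1
    exact mul_nonneg (by linarith [hflt ℓ]) (hu ℓ (hIN ℓ hℓI))
  have hPnn : 0 ≤ P := by
    refine Finset.sum_nonneg fun ℓ hℓ => ?_
    obtain ⟨hℓC, hℓa⟩ := Finset.mem_filter.mp hℓ
    exact mul_nonneg hℓa (hu ℓ (hCN ℓ hℓC))
  have hQnp : Q ≤ 0 := by
    refine Finset.sum_nonpos fun ℓ hℓ => ?_
    obtain ⟨hℓC, hℓa⟩ := Finset.mem_filter.mp hℓ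
    exact mul_nonpos_of_nonpos_of_nonneg (le_of_lt hℓa) (hu ℓ (hCN ℓ hℓC))
  have hc : 0 ≤ f0 / (1 - f0) := div_nonneg (le_of_lt hf0pos) (by linarith)
  have hcf : f0 / (1 - f0) * (1 - f0) = f0 :=
    div_mul_cancel₀ f0 (by linarith : (1:ℝ) - f0 ≠ 0)
  -- case split on the sign of k
  rcases le_or_gt 0 k with hk | hk
  · have hkr : (0 : ℝ) ≤ (k : ℝ) := by exact_mod_cast hk
    have hy : 0 ≤ B - Q := by linarith
    nlinarith [mul_nonneg hc hy]
  · have hkr : (k : ℝ) ≤ -1 := by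
      have hk1 : k ≤ -1 := by omega
      exact_mod_cast hk1
    have hy : 1 - f0 ≤ B - Q := by linarith
    have := mul_le_mul_of_nonneg_left hy hc
    nlinarith
end

section
/- (Intersection cut for the elementary split disjunction, z-form of the MIG cut.) Let A ∈ ℝ^{d×d} be invertible, b ∈ ℝ^d, and k ∈ {1,…,d}. Let z̄ := A^{-1} b, let f_0 := z̄_k − ⌊z̄_k⌋ and assume 0 < f_0 < 1. Write ā_{kℓ} := (A^{-1})_{kℓ}, N_+ := {ℓ : ā_{kℓ} ≥ 0} and N_− := {ℓ : ā_{kℓ} < 0}. Then every z ∈ ℝ^d satisfying A z ≤ b componentwise and satisfying the split disjunction z_k ≤ ⌊z̄_k⌋ or z_k ≥ ⌊z̄_k⌋ + 1 also satisfies the inequality Σ_{ℓ∈N_+} ā_{kℓ} (b − A z)_ℓ − (f_0/(1−f_0)) Σ_{ℓ∈N_−} ā_{kℓ} (b − A z)_ℓ ≥ f_0. -/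
open Matrix

/-- Intersection cut for the elementary split disjunction (z-form of the MIG
cut).  Every `z` with `A z ≤ b` componentwise satisfying the split disjunction
`z_k ≤ ⌊z̄_k⌋ ∨ z_k ≥ ⌊z̄_k⌋ + 1`, where `z̄ = A⁻¹ b`, satisfies the MIG
inequality. -/
theorem intersection_cut_split (d : ℕ) (A : Matrix (Fin d) (Fin d) ℝ)
    (hA : IsUnit A.det) (b : Fin d → ℝ) (k : Fin d)
    (zbar : Fin d → ℝ) (hzbar : zbar = A⁻¹ *ᵥ b)
    (f0 : ℝ) (hf0 : f0 = zbar k - ⌊zbar k⌋)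
    (hf0pos : 0 < f0) (hf0lt : f0 < 1) :
    ∀ z : Fin d → ℝ,
      (∀ ℓ : Fin d, (A *ᵥ z) ℓ ≤ b ℓ) →
      (z k ≤ (⌊zbar k⌋ : ℝ) ∨ (⌊zbar k⌋ : ℝ) + 1 ≤ z k) →
      (∑ ℓ ∈ Finset.univ.filter (fun ℓ => 0 ≤ A⁻¹ k ℓ), A⁻¹ k ℓ * (b - A *ᵥ z) ℓ)
        - (f0 / (1 - f0)) *
          (∑ ℓ ∈ Finset.univ.filter (fun ℓ => A⁻¹ k ℓ < 0), A⁻¹ k ℓ * (b - A *ᵥ z) ℓ)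
      ≥ f0 := by
  intro z hz hdisj
  set s : Fin d → ℝ := b - A *ᵥ z with hs
  have hsnn : ∀ ℓ, 0 ≤ s ℓ := fun ℓ => by
    simp only [hs, Pi.sub_apply, sub_nonneg]; exact hz ℓ
  have hinv : A⁻¹ *ᵥ s = zbar - z := by
    rw [hs, hzbar, Matrix.mulVec_sub, Matrix.mulVec_mulVec,
      Matrix.nonsing_inv_mul A hA, Matrix.one_mulVec]
  set Sp := ∑ ℓ ∈ Finset.univ.filter (fun ℓ => 0 ≤ A⁻¹ k ℓ), A⁻¹ k ℓ * s ℓ with hSp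
  set Sm := ∑ ℓ ∈ Finset.univ.filter (fun ℓ => A⁻¹ k ℓ < 0), A⁻¹ k ℓ * s ℓ with hSm
  have hsum : Sp + Sm = zbar k - z k := by
    have h1 : (A⁻¹ *ᵥ s) k = zbar k - z k := by rw [hinv]; rfl
    rw [Matrix.mulVec, dotProduct] at h1
    rw [hSp, hSm]
    rw [← h1]
    have := Finset.sum_filter_add_sum_filter_not Finset.univ
      (fun ℓ => 0 ≤ A⁻¹ k ℓ) (fun ℓ => A⁻¹ k ℓ * s ℓ)
    rw [← this]
    congr 1
    apply Finset.sum_congr _ (fun _ _ => rfl)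
    ext ℓ
    simp [not_le]
  have hSppos : 0 ≤ Sp := by
    apply Finset.sum_nonneg
    intro ℓ hℓ
    exact mul_nonneg (by simpa using (Finset.mem_filter.mp hℓ).2) (hsnn ℓ)
  have hSmneg : Sm ≤ 0 := by
    apply Finset.sum_nonpos
    intro ℓ hℓ
    exact mul_nonpos_of_nonpos_of_nonneg
      (le_of_lt (by simpa using (Finset.mem_filter.mp hℓ).2)) (hsnn ℓ)
  have hc : 0 ≤ f0 / (1 - f0) := div_nonneg hf0pos.le (by linarith)
  have hc1 : f0 / (1 - f0) * (1 - f0) = f0 :=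
    div_mul_cancel₀ f0 (by linarith)
  rcases hdisj with h | h
  · have h1 : f0 ≤ Sp + Sm := by rw [hsum, hf0]; linarith
    have h2 : f0 / (1 - f0) * Sm ≤ 0 := mul_nonpos_of_nonneg_of_nonpos hc hSmneg
    linarith
  · have h1 : Sp + Sm ≤ f0 - 1 := by rw [hsum, hf0]; linarith
    nlinarith [mul_le_mul_of_nonneg_left (show Sm ≤ f0 - 1 - Sp by linarith) hc,
      mul_nonneg hc hSppos, hc1]
end

section
/- (Validity of the z-form MIG cut for the mixed-integer points.) Let A ∈ ℝ^{d×d} be invertible, b ∈ ℝ^d, and k ∈ {1,…,d}. Let z̄ := A^{-1} b, let f_0 := z̄_k − ⌊z̄_k⌋ and assume 0 < f_0 < 1. Write ā_{kℓ} := (A^{-1})_{kℓ}, N_+ := {ℓ : ā_{kℓ} ≥ 0} and N_− := {ℓ : ā_{kℓ} < 0}. Then every z ∈ ℝ^d with A z ≤ b componentwise and z_k ∈ ℤ satisfies Σ_{ℓ∈N_+} ā_{kℓ} (b − A z)_ℓ − (f_0/(1−f_0)) Σ_{ℓ∈N_−} ā_{kℓ} (b − A z)_ℓ ≥ f_0.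 In particular, the MIG cut is a valid cutting plane for the mixed-integer feasible set S = {z : A z ≤ b} ∩ (ℤ^{d_Z} × ℝ^{d_R}) whenever k ≤ d_Z. -/
open Matrix

lemma mig_key (f0 P N : ℝ) (n : ℤ) (hP : 0 ≤ P) (hN : N ≤ 0)
    (hsum : P + N = f0 + n) (hf0pos : 0 < f0) (hf0lt : f0 < 1) :
    P - (f0 / (1 - f0)) * N ≥ f0 := by
  have h1 : 0 < 1 - f0 := by linarith
  have hc : 0 < f0 / (1 - f0) := div_pos hf0pos h1
  have hc' : (f0 / (1 - f0)) * (1 - f0) = f0 := by field_simp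
  by_cases hn : 0 ≤ n
  · have hn' : (0 : ℝ) ≤ n := by exact_mod_cast hn
    have : (f0 / (1 - f0)) * N ≤ 0 :=
      mul_nonpos_of_nonneg_of_nonpos hc.le hN
    linarith
  · have hn' : (n : ℝ) ≤ -1 := by
      have : n ≤ -1 := by omega
      exact_mod_cast this
    nlinarith [mul_nonneg hc.le hP, mul_nonneg hc.le (show (0:ℝ) ≤ -((n:ℝ)+1) by linarith)]

/-- Validity of the z-form MIG cut for the mixed-integer points: every `z` with
`A z ≤ b` componentwise and `z_k ∈ ℤ` satisfies the MIG inequality.  In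
particular (for `d = d_Z + d_R` and `k ≤ d_Z`), the MIG cut is valid for the
mixed-integer feasible set `S = {z : A z ≤ b} ∩ (ℤ^{d_Z} × ℝ^{d_R})`. -/
theorem mig_cut_z_form_valid (d : ℕ) (A : Matrix (Fin d) (Fin d) ℝ)
    (hA : IsUnit A.det) (b : Fin d → ℝ) (k : Fin d)
    (zbar : Fin d → ℝ) (hzbar : zbar = A⁻¹ *ᵥ b)
    (f0 : ℝ) (hf0 : f0 = zbar k - ⌊zbar k⌋)
    (hf0pos : 0 < f0) (hf0lt : f0 < 1) :
    (∀ z : Fin d → ℝ,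
      (∀ ℓ : Fin d, (A *ᵥ z) ℓ ≤ b ℓ) →
      (∃ m : ℤ, z k = (m : ℝ)) →
      (∑ ℓ ∈ Finset.univ.filter (fun ℓ => 0 ≤ A⁻¹ k ℓ), A⁻¹ k ℓ * (b - A *ᵥ z) ℓ)
        - (f0 / (1 - f0)) *
          (∑ ℓ ∈ Finset.univ.filter (fun ℓ => A⁻¹ k ℓ < 0), A⁻¹ k ℓ * (b - A *ᵥ z) ℓ)
      ≥ f0)
    ∧
    (∀ (dZ dR : ℕ), d = dZ + dR → (k : ℕ) < dZ →
      ∀ z : Fin d → ℝ,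
        (∀ ℓ : Fin d, (A *ᵥ z) ℓ ≤ b ℓ) →
        (∀ j : Fin d, (j : ℕ) < dZ → ∃ m : ℤ, z j = (m : ℝ)) →
        (∑ ℓ ∈ Finset.univ.filter (fun ℓ => 0 ≤ A⁻¹ k ℓ), A⁻¹ k ℓ * (b - A *ᵥ z) ℓ)
          - (f0 / (1 - f0)) *
            (∑ ℓ ∈ Finset.univ.filter (fun ℓ => A⁻¹ k ℓ < 0), A⁻¹ k ℓ * (b - A *ᵥ z) ℓ)
        ≥ f0) := by
  have main : ∀ z : Fin d → ℝ,
      (∀ ℓ : Fin d, (A *ᵥ z) ℓ ≤ b ℓ) →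
      (∃ m : ℤ, z k = (m : ℝ)) →
      (∑ ℓ ∈ Finset.univ.filter (fun ℓ => 0 ≤ A⁻¹ k ℓ), A⁻¹ k ℓ * (b - A *ᵥ z) ℓ)
        - (f0 / (1 - f0)) *
          (∑ ℓ ∈ Finset.univ.filter (fun ℓ => A⁻¹ k ℓ < 0), A⁻¹ k ℓ * (b - A *ᵥ z) ℓ)
      ≥ f0 := by
    intro z hz ⟨m, hm⟩
    set s : Fin d → ℝ := b - A *ᵥ z with hs
    have hsnn : ∀ ℓ, 0 ≤ s ℓ := by
      intro ℓ; simp [hs, sub_nonneg]; exact hz ℓ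
    set P := ∑ ℓ ∈ Finset.univ.filter (fun ℓ => 0 ≤ A⁻¹ k ℓ), A⁻¹ k ℓ * s ℓ with hPdef
    set N := ∑ ℓ ∈ Finset.univ.filter (fun ℓ => A⁻¹ k ℓ < 0), A⁻¹ k ℓ * s ℓ with hNdef
    have hP : 0 ≤ P :=
      Finset.sum_nonneg fun ℓ hℓ =>
        mul_nonneg (Finset.mem_filter.mp hℓ).2 (hsnn ℓ)
    have hN : N ≤ 0 :=
      Finset.sum_nonpos fun ℓ hℓ =>
        mul_nonpos_of_nonpos_of_nonneg (Finset.mem_filter.mp hℓ).2.le (hsnn ℓ)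
    have hsplit : P + N = ∑ ℓ, A⁻¹ k ℓ * s ℓ := by
      rw [hPdef, hNdef]
      rw [← Finset.sum_filter_add_sum_filter_not Finset.univ (fun ℓ => 0 ≤ A⁻¹ k ℓ)]
      congr 1
      apply Finset.sum_congr _ (fun _ _ => rfl)
      ext ℓ; simp [not_le]
    have hinv : A⁻¹ *ᵥ (A *ᵥ z) = z := by
      rw [mulVec_mulVec, Matrix.nonsing_inv_mul A hA, one_mulVec]
    have htot : ∑ ℓ, A⁻¹ k ℓ * s ℓ = zbar k - z k := by
      have : ∑ ℓ, A⁻¹ k ℓ * s ℓ = (A⁻¹ *ᵥ s) k := rfl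
      rw [this, hs, mulVec_sub, hinv, hzbar]
      simp
    have hsum : P + N = f0 + ((⌊zbar k⌋ - m : ℤ) : ℝ) := by
      rw [hsplit, htot, hm, hf0]; push_cast; ring
    exact mig_key f0 P N (⌊zbar k⌋ - m) hP hN hsum hf0pos hf0lt
  exact ⟨main, fun dZ dR _ hk z hz hint => main z hz (hint k hk)⟩
end
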